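/- Let f^p be a generalized median voter scheme. For any agent i: (i) if p_{N\{i}} ≤ p_{{i}}, then x ∈ V_i if and only if x < p_{N\{i}} or x > p_{{i}}; (ii) if p_{{i}} < p_{N\{i}}, then V_i = X. -/

import Mathlib

/-- A preference profile: each agent `i : Fin n` has a strict preference,
modeled as a linear order on the set of alternatives `X`. -/
abbrev Profile (n : ℕ) (X : Type*) := Fin n → LinearOrder X

/-- The top (best) alternative of a preference `L`. -/
noncomputable def top {X : Type*} [Fintype X] [Nonempty X] (L : LinearOrder X) : X :=
  @Finset.max' X L Finset.univ Finset.univ_nonempty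

/-- `x` is strictly preferred to `y` according to `L`. -/
def prefers {X : Type*} (L : LinearOrder X) (x y : X) : Prop := L.lt y x

/-- The option set left open by preference `L` of agent `i` at rule `f`. -/
def OptionSet {n : ℕ} {X : Type*} (f : Profile n X → X) (i : Fin n) (L : LinearOrder X) :
    Set X :=
  {x | ∃ P : Profile n X, P i = L ∧ f P = x}

/-- `Li'` is a profitable manipulation of `f` at (true preference) `Li` for agent `i`. -/
def IsManip {n : ℕ} {X : Type*} (f : Profile n X → X) (i : Fin n)
    (Li Li' : LinearOrder X) : Prop :=
  ∃ P : Profile n X, P i = Li ∧ prefers Li (f (Function.update P i Li')) (f P)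

/-- The worst element of `O(Li')` is strictly `Li`-preferred to the worst element of `O(Li)`.
For nonempty finite option sets this is equivalent to: some element of `O(Li)` is strictly
worse (w.r.t. `Li`) than every element of `O(Li')`. -/
def WorstImproves {n : ℕ} {X : Type*} (f : Profile n X → X) (i : Fin n)
    (Li Li' : LinearOrder X) : Prop :=
  ∃ w ∈ OptionSet f i Li, ∀ w' ∈ OptionSet f i Li', prefers Li w' w

/-- The best element of `O(Li')` is strictly `Li`-preferred to the best element of `O(Li)`.
For nonempty finite option sets this is equivalent to: some element of `O(Li')` is strictly
better (w.r.t. `Li`) than every element of `O(Li)`. -/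
def BestImproves {n : ℕ} {X : Type*} (f : Profile n X → X) (i : Fin n)
    (Li Li' : LinearOrder X) : Prop :=
  ∃ b' ∈ OptionSet f i Li', ∀ b ∈ OptionSet f i Li, prefers Li b' b

/-- `Li'` is an obvious manipulation of `f` at `Li` for agent `i`. -/
def IsObviousManip {n : ℕ} {X : Type*} (f : Profile n X → X) (i : Fin n)
    (Li Li' : LinearOrder X) : Prop :=
  IsManip f i Li Li' ∧ (WorstImproves f i Li Li' ∨ BestImproves f i Li Li')

/-- `f` is not obviously manipulable. -/
def NOM {n : ℕ} {X : Type*} (f : Profile n X → X) : Prop :=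
  ∀ (i : Fin n) (Li Li' : LinearOrder X), ¬ IsObviousManip f i Li Li'

/-- `f` is tops-only. -/
def TopsOnly {n : ℕ} {X : Type*} [Fintype X] [Nonempty X] (f : Profile n X → X) : Prop :=
  ∀ P P' : Profile n X, (∀ i, top (P i) = top (P' i)) → f P = f P'

/-- The set `V_i` of alternatives that agent `i` vetoes via some preference. -/
def VetoSet {n : ℕ} {X : Type*} (f : Profile n X → X) (i : Fin n) : Set X :=
  {x | ∃ L : LinearOrder X, x ∉ OptionSet f i L}

/-- The set `SV_i` of alternatives strongly vetoed by agent `i`: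
`x` is vetoed via `L` precisely when the top of `L` differs from `x`. -/
def StrongVetoSet {n : ℕ} {X : Type*} [Fintype X] [Nonempty X]
    (f : Profile n X → X) (i : Fin n) : Set X :=
  {x | ∀ L : LinearOrder X, x ∉ OptionSet f i L ↔ top L ≠ x}

/-- `f` is dictatorial: some agent's top alternative is always selected. -/
def Dictatorial {n : ℕ} {X : Type*} [Fintype X] [Nonempty X]
    (f : Profile n X → X) : Prop :=
  ∃ i : Fin n, ∀ P : Profile n X, f P = top (P i)

/-- The ordered set of alternatives `X = {a, a+1, ..., b} ⊆ ℕ`. -/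
abbrev Alt (a b : ℕ) : Type := {x : ℕ // x ∈ Finset.Icc a b}

/-- `p` is a monotonic family of fixed ballots: `p_N = a`, `p_∅ = b`, and
`S ⊆ T` implies `p_T ≤ p_S`. -/
def MonotonicFamily {n a b : ℕ} (p : Finset (Fin n) → Alt a b) : Prop :=
  (p Finset.univ).val = a ∧ (p ∅).val = b ∧
    ∀ S T : Finset (Fin n), S ⊆ T → p T ≤ p S

/-- The generalized median voter scheme associated with the family `p`:
`f^p(P) = min_{S ⊆ N} max_{j ∈ S} {t(P_j), p_S}`. -/
noncomputable def gms {n a b : ℕ} [Nonempty (Alt a b)]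
    (p : Finset (Fin n) → Alt a b) (P : Profile n (Alt a b)) : Alt a b :=
  Finset.univ.inf' ⟨∅, Finset.mem_univ _⟩ fun S : Finset (Fin n) =>
    (insert (p S) (S.image fun j => top (P j))).max' (Finset.insert_nonempty _ _)

/-! The outcome of `gms p` always lies between `min (t(P_i), p_{N\{i}})` and
`max (t(P_i), p_{{i}})`: every coalition without `i` has a ballot at least `p_{N\{i}}`, and the
coalition `{i}` caps the outcome by its own maximum. Conversely, when all other agents put `y` on
top, `y` is the outcome as soon as it lies in that interval. Hence the option set of a preference
with top `t` is exactly this interval, and `x` escapes one of these intervals iff it lies below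
`p_{N\{i}}` (take `t = p_{N\{i}}`) or above `p_{{i}}` (take `t = p_{{i}}`). -/

theorem top_eq_of_forall_le {X : Type*} [Fintype X] [Nonempty X] (L : LinearOrder X) (t : X)
    (h : ∀ x, L.le x t) : top L = t :=
  letI := L
  le_antisymm (Finset.max'_le _ _ _ fun x _ => h x) (Finset.le_max' _ _ (Finset.mem_univ t))

theorem exists_linearOrder_top_eq {X : Type*} [Fintype X] [Nonempty X] (t : X) :
    ∃ L : LinearOrder X, top L = t := by
  classical
  let e : X → WithTop (Fin (Fintype.card X)) := fun x =>
    if x = t then ⊤ else Fintype.equivFin X x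
  have he : Function.Injective e := by
    intro x y hxy
    by_cases hx : x = t <;> by_cases hy : y = t <;> simp_all [e]
  refine ⟨LinearOrder.lift' e he, top_eq_of_forall_le _ t fun x => ?_⟩
  show e x ≤ e t
  simp [e]

theorem exists_notMem_Icc_min_max_iff {α : Type*} [LinearOrder α] {lo hi x : α} :
    (∃ t, x ∉ Set.Icc (min t lo) (max t hi)) ↔ x < lo ∨ hi < x := by
  constructor
  · rintro ⟨t, ht⟩
    by_contra! h
    exact ht ⟨min_le_of_right_le h.1, le_max_of_le_right h.2⟩
  · rintro (h | h)
    · exact ⟨lo, fun hx => h.not_ge (by simpa using hx.1)⟩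
    · exact ⟨hi, fun hx => h.not_ge (by simpa using hx.2)⟩

section GMS

variable {n a b : ℕ}

theorem MonotonicFamily.antitone {p : Finset (Fin n) → Alt a b} (hp : MonotonicFamily p) :
    Antitone p :=
  fun S T hST => hp.2.2 S T hST

theorem MonotonicFamily.univ_le {p : Finset (Fin n) → Alt a b} (hp : MonotonicFamily p)
    (y : Alt a b) : p Finset.univ ≤ y :=
  show (p Finset.univ).val ≤ y.val from hp.1.trans_le (Finset.mem_Icc.mp y.2).1

theorem MonotonicFamily.le_empty {p : Finset (Fin n) → Alt a b} (hp : MonotonicFamily p)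
    (y : Alt a b) : y ≤ p ∅ :=
  show y.val ≤ (p ∅).val from (Finset.mem_Icc.mp y.2).2.trans_eq hp.2.1.symm

variable [Nonempty (Alt a b)] (p : Finset (Fin n) → Alt a b) (P : Profile n (Alt a b))

theorem le_gms_iff (y : Alt a b) :
    y ≤ gms p P ↔ ∀ S, y ≤ p S ∨ ∃ j ∈ S, y ≤ top (P j) := by
  refine (Finset.le_inf'_iff _ _).trans ?_
  simp [Finset.max'_eq_sup', Finset.le_sup'_iff]

theorem gms_le_iff (y : Alt a b) :
    gms p P ≤ y ↔ ∃ S, p S ≤ y ∧ ∀ j ∈ S, top (P j) ≤ y := by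
  refine (Finset.inf'_le_iff _).trans ?_
  simp [Finset.max'_le_iff]

variable {p}

theorem min_le_gms (hp : Antitone p) (i : Fin n) :
    min (top (P i)) (p (Finset.univ.erase i)) ≤ gms p P := by
  refine (le_gms_iff p P _).2 fun S => ?_
  by_cases hi : i ∈ S
  · exact Or.inr ⟨i, hi, min_le_left _ _⟩
  · exact Or.inl <| (min_le_right _ _).trans <| hp fun j hj =>
      Finset.mem_erase.2 ⟨fun hji => hi (hji ▸ hj), Finset.mem_univ j⟩

theorem gms_le_max (i : Fin n) : gms p P ≤ max (top (P i)) (p {i}) :=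
  (gms_le_iff p P _).2 ⟨{i}, le_max_right _ _, by simp⟩

theorem gms_eq_of_forall_ne_top_eq (hp : MonotonicFamily p) (i : Fin n) {y : Alt a b}
    (htop : ∀ j ≠ i, top (P j) = y)
    (hlow : min (top (P i)) (p (Finset.univ.erase i)) ≤ y)
    (hupp : y ≤ max (top (P i)) (p {i})) :
    gms p P = y := by
  have top_le : ∀ j, j ≠ i → top (P j) ≤ y := fun j hj => (htop j hj).le
  refine le_antisymm ((gms_le_iff p P y).2 ?_) ((le_gms_iff p P y).2 fun S => ?_)
  · rcases min_le_iff.1 hlow with hi | he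
    · refine ⟨Finset.univ, hp.univ_le y, fun j _ => ?_⟩
      rcases eq_or_ne j i with rfl | hj
      exacts [hi, top_le j hj]
    · exact ⟨Finset.univ.erase i, he, fun j hj => top_le j (Finset.ne_of_mem_erase hj)⟩
  · by_cases hS : ∃ j ∈ S, j ≠ i
    · obtain ⟨j, hjS, hji⟩ := hS
      exact Or.inr ⟨j, hjS, (htop j hji).ge⟩
    · push Not at hS
      rcases Finset.subset_singleton_iff.1 (fun j hj => Finset.mem_singleton.2 (hS j hj)) with
        rfl | rfl
      · exact Or.inl (hp.le_empty y)
      · rcases le_max_iff.1 hupp with hi | hs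
        exacts [Or.inr ⟨i, Finset.mem_singleton_self i, hi⟩, Or.inl hs]

/- A separate definition: with a preference `L : LinearOrder (Alt a b)` in scope, `min` and `max`
would be elaborated with respect to `L` instead of the order of the alternatives. -/
def gmsOptions (p : Finset (Fin n) → Alt a b) (i : Fin n) (t : Alt a b) : Set (Alt a b) :=
  Set.Icc (min t (p (Finset.univ.erase i))) (max t (p {i}))

theorem optionSet_gms (hp : MonotonicFamily p) (i : Fin n) (L : LinearOrder (Alt a b)) :
    OptionSet (gms p) i L = gmsOptions p i (top L) := by
  ext y
  constructor
  · rintro ⟨P, rfl, rfl⟩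
    exact ⟨min_le_gms P hp.antitone i, gms_le_max P i⟩
  · rintro ⟨hlow, hupp⟩
    obtain ⟨Ly, hLy⟩ := exists_linearOrder_top_eq y
    refine ⟨Function.update (fun _ => Ly) i L, Function.update_self .., ?_⟩
    refine gms_eq_of_forall_ne_top_eq _ hp i (fun j hj => ?_) ?_ ?_
    · rw [Function.update_of_ne hj, hLy]
    all_goals rwa [Function.update_self]

theorem vetoSet_gms_eq_setOf_exists_notMem (hp : MonotonicFamily p) (i : Fin n) :
    VetoSet (gms p) i = {x | ∃ t, x ∉ gmsOptions p i t} := by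
  ext x
  simp only [VetoSet, optionSet_gms hp]
  constructor
  · rintro ⟨L, hL⟩
    exact ⟨top L, hL⟩
  · rintro ⟨t, ht⟩
    obtain ⟨L, rfl⟩ := exists_linearOrder_top_eq t
    exact ⟨L, ht⟩

theorem vetoSet_gms (hp : MonotonicFamily p) (i : Fin n) :
    VetoSet (gms p) i = {x | x < p (Finset.univ.erase i) ∨ p {i} < x} := by
  rw [vetoSet_gms_eq_setOf_exists_notMem hp]
  ext x
  exact exists_notMem_Icc_min_max_iff

end GMS

theorem gms_vetoSet_general {n a b : ℕ} [Nonempty (Alt a b)]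
    (p : Finset (Fin n) → Alt a b) (hp : MonotonicFamily p) (i : Fin n) :
    (p (Finset.univ.erase i) ≤ p {i} →
      ∀ x : Alt a b, x ∈ VetoSet (gms p) i ↔
        x < p (Finset.univ.erase i) ∨ p {i} < x) ∧
    (p {i} < p (Finset.univ.erase i) →
      VetoSet (gms p) i = Set.univ) := by
  rw [vetoSet_gms hp]
  refine ⟨fun _ x => Iff.rfl, fun h => Set.eq_univ_of_forall fun x => ?_⟩
  exact (lt_or_ge x _).imp_right h.trans_le

/-- Veto sets of a generalized median voter scheme: (i) if `p_{N\{i}} ≤ p_{{i}}` then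
`x ∈ V_i` iff `x < p_{N\{i}}` or `x > p_{{i}}`; (ii) if `p_{{i}} < p_{N\{i}}` then
`V_i = X`. -/
theorem gms_vetoSet {n a b : ℕ} [Nonempty (Alt a b)]
    (hn : 2 ≤ n) (hab : a ≤ b)
    (p : Finset (Fin n) → Alt a b) (hp : MonotonicFamily p) (i : Fin n) :
    (p (Finset.univ.erase i) ≤ p {i} →
      ∀ x : Alt a b, x ∈ VetoSet (gms p) i ↔
        x < p (Finset.univ.erase i) ∨ p {i} < x) ∧
    (p {i} < p (Finset.univ.erase i) →
      VetoSet (gms p) i = Set.univ) :=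
  gms_vetoSet_general p hp i
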